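/- arXiv:2402.06030 — 2 statements merged into one kernel-verified Lean document; each statement's English description precedes it below -/
import Mathlib

section
/- The Shapley value satisfies efficiency: Σ_{i ∈ N} φᵢ(U) = U(N) - U(∅), where φᵢ(U) = Σ_{S ⊆ N∖{i}} (|S|!(n-|S|-1)!/n!)(U(S∪{i}) - U(S)). -/
/-!
Double counting the pairs `(i, S)` with `i ∉ S` shows that in `∑ i, φᵢ(U)` the value `U T`
appears with coefficient `|T| w(|T| - 1) - (n - |T|) w(|T|)`, where `w(k) = k!(n-k-1)!/n!`.
Both products equal `|T|!(n-|T|)!/n!`, except that the first vanishes for `T = ∅` and the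
second for `T = N`; so only `U N` and `U ∅` survive, with coefficients `1` and `-1`.
-/

open Finset

/-- The Shapley value of player `i`:
`φᵢ(U) = Σ_{S ⊆ N∖{i}} (|S|!(n-|S|-1)!/n!)(U(S∪{i}) - U(S))`. -/
noncomputable def shapley {α : Type*} [Fintype α] [DecidableEq α]
    (U : Finset α → ℝ) (i : α) : ℝ :=
  ∑ S ∈ (Finset.univ.erase i).powerset,
    ((S.card.factorial * (Fintype.card α - S.card - 1).factorial : ℝ) /
      (Fintype.card α).factorial) * (U (insert i S) - U S)

section DoubleCounting

variable {α β : Type*} [Fintype α] [DecidableEq α] [AddCommMonoid β]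

theorem notMem_of_mem_powerset_erase {i : α} {S : Finset α}
    (hS : S ∈ (univ.erase i).powerset) : i ∉ S :=
  fun hi => notMem_erase i univ (mem_powerset.1 hS hi)

theorem sum_finset_eq_powerset_erase_add_insert (i : α) (f : Finset α → β) :
    ∑ T, f T = ∑ S ∈ (univ.erase i).powerset, f S +
      ∑ S ∈ (univ.erase i).powerset, f (insert i S) := by
  rw [← sum_powerset_insert (notMem_erase i univ), insert_erase (mem_univ i), powerset_univ]

theorem sum_sum_powerset_erase_insert (g : Finset α → β) :
    ∑ i, ∑ S ∈ (univ.erase i).powerset, g (insert i S) = ∑ T, #T • g T := by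
  have (i : α) : ∑ S ∈ (univ.erase i).powerset, g (insert i S) =
      ∑ T, if i ∈ T then g T else 0 := by
    rw [sum_finset_eq_powerset_erase_add_insert i,
      sum_eq_zero fun S hS => if_neg (notMem_of_mem_powerset_erase hS), zero_add]
    simp
  simp_rw [this]
  rw [sum_comm]
  simp [sum_ite_mem]

theorem sum_sum_powerset_erase (g : Finset α → β) :
    ∑ i, ∑ S ∈ (univ.erase i).powerset, g S = ∑ T, #Tᶜ • g T := by
  have (i : α) : ∑ S ∈ (univ.erase i).powerset, g S = ∑ T, if i ∈ T then 0 else g T := by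
    rw [sum_finset_eq_powerset_erase_add_insert i,
      sum_congr rfl fun S hS => if_neg (notMem_of_mem_powerset_erase hS)]
    simp
  simp_rw [this]
  rw [sum_comm]
  simp [sum_ite, filter_not, compl_eq_univ_sdiff]

end DoubleCounting

section Weights

noncomputable def shapleyWeight (n k : ℕ) : ℝ :=
  (k.factorial * (n - k - 1).factorial : ℝ) / n.factorial

variable {n k : ℕ}

theorem natCast_mul_shapleyWeight_pred (hk : k ≤ n) :
    k * shapleyWeight n (k - 1) =
      k.factorial * (n - k).factorial / n.factorial - if k = 0 then 1 else 0 := by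
  rcases eq_or_ne k 0 with rfl | hk0
  · simp [n.factorial_ne_zero]
  · have : n - (k - 1) - 1 = n - k := by omega
    rw [shapleyWeight, this, if_neg hk0, sub_zero, ← mul_div_assoc, ← mul_assoc]
    congr 2
    exact_mod_cast Nat.mul_factorial_pred hk0

theorem natCast_sub_mul_shapleyWeight (hk : k ≤ n) :
    ((n - k : ℕ) : ℝ) * shapleyWeight n k =
      k.factorial * (n - k).factorial / n.factorial - if k = n then 1 else 0 := by
  rcases eq_or_ne k n with rfl | hkn
  · simp [k.factorial_ne_zero]
  · rw [shapleyWeight, if_neg hkn, sub_zero, ← mul_div_assoc, mul_left_comm]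
    congr 2
    exact_mod_cast Nat.mul_factorial_pred (by omega : n - k ≠ 0)

theorem natCast_mul_shapleyWeight_pred_sub (hk : k ≤ n) :
    k * shapleyWeight n (k - 1) - ((n - k : ℕ) : ℝ) * shapleyWeight n k =
      (if k = n then 1 else 0) - if k = 0 then 1 else 0 := by
  rw [natCast_mul_shapleyWeight_pred hk, natCast_sub_mul_shapleyWeight hk]
  ring

end Weights

/-- Efficiency of the Shapley value: `Σ_{i ∈ N} φᵢ(U) = U(N) - U(∅)`. -/
theorem shapley_efficiency {α : Type*} [Fintype α] [DecidableEq α]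
    (U : Finset α → ℝ) :
    ∑ i, shapley U i = U Finset.univ - U ∅ := by
  set w := shapleyWeight (Fintype.card α)
  have marginal (i : α) : shapley U i = ∑ S ∈ (univ.erase i).powerset,
      (w (#(insert i S) - 1) * U (insert i S) - w #S * U S) :=
    sum_congr rfl fun S hS => by
      rw [card_insert_of_notMem (notMem_of_mem_powerset_erase hS), Nat.add_sub_cancel, mul_sub]
      rfl
  calc ∑ i, shapley U i = ∑ T, (#T • (w (#T - 1) * U T) - #Tᶜ • (w #T * U T)) := by
        simp only [marginal, sum_sub_distrib]
        rw [sum_sum_powerset_erase_insert (fun T => w (#T - 1) * U T),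
          sum_sum_powerset_erase (fun T => w #T * U T)]
    _ = ∑ T, ((if T = univ then 1 else 0) - (if T = ∅ then 1 else 0)) * U T :=
        sum_congr rfl fun T _ => by
          rw [nsmul_eq_mul, nsmul_eq_mul, card_compl, ← mul_assoc, ← mul_assoc, ← sub_mul,
            natCast_mul_shapleyWeight_pred_sub (card_le_univ T)]
          simp_rw [card_eq_iff_eq_univ, card_eq_zero]
    _ = U univ - U ∅ := by simp [sub_mul, sum_sub_distrib]
end

section
/- The scaled difference of semivalues decomposes by coalition size: for distinct players i, j, n(φ(i; U, w) - φ(j; U, w)) = Σ_{k=1}^{n-1} (w(k) + w(k+1)) C(n-2, k-1) Δₖ^{i,j}(U), where Δₖ^{i,j}(U) = (1 / C(n-2, k-1)) Σ_{S ⊆ N∖{i,j}, |S| = k-1} (U(S ∪ {i}) - U(S ∪ {j})). -/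
open Finset

/-- The semivalue with weight function `w`. -/
noncomputable def semival {α : Type*} [Fintype α] [DecidableEq α]
    (w : ℕ → ℝ) (U : Finset α → ℝ) (i : α) : ℝ :=
  ∑ j ∈ Finset.Icc 1 (Fintype.card α), (w j / (Fintype.card α : ℝ)) *
    ∑ S ∈ (Finset.univ.erase i).powerset.filter (fun S => S.card = j - 1),
      (U (insert i S) - U S)

/-!
Both sides are weighted sums over the coalitions `S ⊆ N ∖ {i, j}`. A coalition `T ∌ i` is
either such an `S` or `S ∪ {j}`, and the marginal contributions of `i` to `S` and of `j` to `S`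
differ by `U(S ∪ {i}) - U(S ∪ {j})`, as do those of `i` to `S ∪ {j}` and of `j` to `S ∪ {i}`.
So `S` enters `n (φ(i) - φ(j))` with weight `w(|S| + 1) + w(|S| + 2)`, which is its weight
on the right-hand side as well.
-/

theorem sum_Icc_mul_sum_powerset_filter_card {α R : Type*} [NonUnitalNonAssocSemiring R]
    (s : Finset α) {N : ℕ} (hs : s.card < N) (a : ℕ → R) (f : Finset α → R) :
    ∑ m ∈ Icc 1 N, a m * ∑ S ∈ s.powerset.filter (fun S => S.card = m - 1), f S =
      ∑ S ∈ s.powerset, a (S.card + 1) * f S := by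
  have hmaps : ∀ S ∈ s.powerset, S.card + 1 ∈ Icc 1 N := fun S hS =>
    mem_Icc.mpr ⟨by omega, by have := card_le_card (mem_powerset.mp hS); omega⟩
  rw [← sum_fiberwise_of_maps_to hmaps]
  refine sum_congr rfl fun m hm => ?_
  have hfiber : s.powerset.filter (fun S => S.card = m - 1) =
      s.powerset.filter (fun S => S.card + 1 = m) :=
    filter_congr fun S _ => by have := (mem_Icc.mp hm).1; omega
  rw [hfiber, mul_sum]
  exact sum_congr rfl fun S hS => by rw [(mem_filter.mp hS).2]

theorem card_mul_semival {α : Type*} [Fintype α] [DecidableEq α]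
    (w : ℕ → ℝ) (U : Finset α → ℝ) (i : α) :
    (Fintype.card α : ℝ) * semival w U i =
      ∑ S ∈ (univ.erase i).powerset, w (S.card + 1) * (U (insert i S) - U S) := by
  have hcard : (univ.erase i).card < Fintype.card α := card_erase_lt_of_mem (mem_univ i)
  have hne : (Fintype.card α : ℝ) ≠ 0 := Nat.cast_ne_zero.mpr (Fintype.card_pos_iff.mpr ⟨i⟩).ne'
  rw [semival, mul_sum, ← sum_Icc_mul_sum_powerset_filter_card _ hcard]
  refine sum_congr rfl fun m _ => ?_
  field_simp

theorem sum_marginal_sub_sum_marginal {α R : Type*} [DecidableEq α] [CommRing R]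
    (U : Finset α → R) (a : ℕ → R) {P : Finset α} {i j : α} (hi : i ∉ P) (hj : j ∉ P) :
    ∑ T ∈ (insert j P).powerset, a T.card * (U (insert i T) - U T) -
        ∑ T ∈ (insert i P).powerset, a T.card * (U (insert j T) - U T) =
      ∑ S ∈ P.powerset, (a S.card + a (S.card + 1)) * (U (insert i S) - U (insert j S)) := by
  rw [sum_powerset_insert hj, sum_powerset_insert hi, add_sub_add_comm, ← sum_sub_distrib,
    ← sum_sub_distrib, ← sum_add_distrib]
  refine sum_congr rfl fun S hS => ?_
  have hSP := mem_powerset.mp hS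
  rw [card_insert_of_notMem fun h => hj (hSP h), card_insert_of_notMem fun h => hi (hSP h),
    insert_comm]
  ring

/-- The scaled difference of semivalues decomposes by coalition size:
`n(φ(i) - φ(j)) = Σ_{k=1}^{n-1} (w(k)+w(k+1)) Δₖ^{i,j}(U)` with the unnormalized
`Δₖ^{i,j}(U) = Σ_{S ⊆ N∖{i,j}, |S|=k-1} (U(S∪{i}) - U(S∪{j}))`. -/
theorem semivalue_scaled_difference {α : Type*} [Fintype α] [DecidableEq α]
    (U : Finset α → ℝ) (w : ℕ → ℝ) (i j : α) (hij : i ≠ j) :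
    (Fintype.card α : ℝ) * (semival w U i - semival w U j) =
      ∑ k ∈ Finset.Icc 1 (Fintype.card α - 1), (w k + w (k + 1)) *
        ∑ S ∈ ((Finset.univ.erase i).erase j).powerset.filter (fun S => S.card = k - 1),
          (U (insert i S) - U (insert j S)) := by
  have hj : j ∈ univ.erase i := mem_erase.mpr ⟨hij.symm, mem_univ j⟩
  have hi : i ∈ univ.erase j := mem_erase.mpr ⟨hij, mem_univ i⟩
  have hjP : insert j ((univ.erase i).erase j) = univ.erase i := insert_erase hj
  have hiP : insert i ((univ.erase i).erase j) = univ.erase j := by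
    rw [erase_right_comm, insert_erase hi]
  have hcard : ((univ.erase i).erase j).card < Fintype.card α - 1 := by
    simpa only [card_erase_of_mem (mem_univ i), card_univ] using card_erase_lt_of_mem hj
  have hdiff := sum_marginal_sub_sum_marginal U (fun c => w (c + 1))
    (by simp : i ∉ (univ.erase i).erase j) (notMem_erase j (univ.erase i))
  rw [hjP, hiP] at hdiff
  rw [sum_Icc_mul_sum_powerset_filter_card _ hcard, mul_sub, card_mul_semival, card_mul_semival,
    hdiff]
end
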